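/- arXiv:math/0306043 — 6 statements merged into one kernel-verified Lean document; each statement's English description precedes it below -/
import Mathlib

section
/- Let R = ⊕_{n≥0} R_n be a positively graded algebra over a commutative ring K such that each R_n is a finitely generated K-module. Then R is generated in finite degrees (i.e., some truncation R_0 ⊕ ... ⊕ R_m generates R as a ring) if and only if R is finitely generated as a K-algebra. -/
/-!
Both directions compare the subring generated by the truncation `R₀ ⊕ ⋯ ⊕ Rₘ` with the
`K`-subalgebra it generates; the two agree because `R₀` contains the image of `K`.
If the truncation generates `R`, then `R` is generated as a `K`-algebra by finite spanning
sets of the finitely many `Rᵢ`, `i ≤ m`. Conversely, a finite set of algebra generators has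
homogeneous components of bounded degree, and these lie in the truncation.
-/

open DirectSum

section Adjoin

variable {K R : Type*} [CommRing K] [Ring R] [Algebra K R]

theorem Subalgebra.fg_adjoin_of_submodule_fg {N : Submodule K R} (hN : N.FG) :
    (Algebra.adjoin K (N : Set R)).FG := by
  obtain ⟨t, rfl⟩ := hN
  rw [Algebra.adjoin_span]
  exact Subalgebra.fg_adjoin_finset t

theorem Subalgebra.fg_adjoin_biUnion_of_fg {ι : Type*} (s : Finset ι) (M : ι → Submodule K R)
    (hM : ∀ i ∈ s, (M i).FG) : (Algebra.adjoin K (⋃ i ∈ s, (M i : Set R))).FG := by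
  rw [← Algebra.adjoin_span, Submodule.span_iUnion₂]
  simp only [Submodule.span_eq]
  exact Subalgebra.fg_adjoin_of_submodule_fg (Submodule.fg_biSup s M hM)

theorem Subring.closure_eq_toSubring_adjoin {s : Set R}
    (hs : Set.range (algebraMap K R) ⊆ s) :
    Subring.closure s = (Algebra.adjoin K s).toSubring := by
  rw [Algebra.adjoin_eq_ring_closure, Set.union_eq_self_of_subset_left hs]

end Adjoin

theorem DirectSum.mem_biSup_of_support_decompose_subset {ι K M : Type*} [DecidableEq ι]
    [Semiring K] [AddCommMonoid M] [Module K M] (ℳ : ι → Submodule K M) [Decomposition ℳ]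
    [∀ (i) (x : ℳ i), Decidable (x ≠ 0)] {s : Finset ι} {x : M}
    (hx : (decompose ℳ x).support ⊆ s) : x ∈ ⨆ i ∈ s, ℳ i := by
  rw [← sum_support_decompose ℳ x]
  exact Submodule.sum_mem _ fun i hi =>
    Submodule.mem_iSup_of_mem i (Submodule.mem_iSup_of_mem (hx hi) (decompose ℳ x i).2)

section Graded

variable {K R : Type*} [CommRing K] [Ring R] [Algebra K R]
  (𝒜 : ℕ → Submodule K R) [GradedAlgebra 𝒜]

theorem GradedAlgebra.closure_truncation_eq_toSubring_adjoin (m : ℕ) :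
    Subring.closure (⋃ i ∈ Finset.range (m + 1), (𝒜 i : Set R)) =
      (Algebra.adjoin K (⋃ i ∈ Finset.range (m + 1), (𝒜 i : Set R))).toSubring := by
  refine Subring.closure_eq_toSubring_adjoin ?_
  rintro _ ⟨k, rfl⟩
  exact Set.mem_biUnion (Finset.mem_range.2 m.succ_pos) (SetLike.algebraMap_mem_graded 𝒜 k)

theorem GradedAlgebra.mem_adjoin_truncation_of_support_subset
    [∀ (i) (x : 𝒜 i), Decidable (x ≠ 0)] {m : ℕ} {x : R}
    (hx : (decompose 𝒜 x).support ⊆ Finset.range (m + 1)) :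
    x ∈ Algebra.adjoin K (⋃ i ∈ Finset.range (m + 1), (𝒜 i : Set R)) := by
  have htrunc : ⨆ i ∈ Finset.range (m + 1), 𝒜 i ≤
      Subalgebra.toSubmodule (Algebra.adjoin K (⋃ i ∈ Finset.range (m + 1), (𝒜 i : Set R))) :=
    iSup₂_le fun i hi y hy => Algebra.subset_adjoin (Set.mem_biUnion hi hy)
  exact htrunc (mem_biSup_of_support_decompose_subset 𝒜 hx)

end Graded

/-- A positively graded algebra `R = ⊕ₙ Rₙ` over a commutative ring `K` whose
homogeneous components are finitely generated `K`-modules is generated in finite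
degrees (some truncation `R₀ ⊕ ... ⊕ Rₘ` generates `R` as a ring) iff `R` is
finitely generated as a `K`-algebra. -/
theorem stmt_6 (K R : Type) [CommRing K] [Ring R] [Algebra K R]
    (𝒜 : ℕ → Submodule K R) [GradedAlgebra 𝒜]
    (hfg : ∀ n, (𝒜 n).FG) :
    (∃ m : ℕ, Subring.closure (⋃ i ∈ Finset.range (m + 1), (𝒜 i : Set R)) = ⊤) ↔
      Algebra.FiniteType K R := by
  classical
  simp only [GradedAlgebra.closure_truncation_eq_toSubring_adjoin, Algebra.toSubring_eq_top]
  constructor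
  · rintro ⟨m, hm⟩
    exact ⟨hm ▸ Subalgebra.fg_adjoin_biUnion_of_fg _ 𝒜 fun i _ => hfg i⟩
  · rintro ⟨S, hS⟩
    obtain ⟨m, hm⟩ := Finset.exists_nat_subset_range (S.biUnion fun x => (decompose 𝒜 x).support)
    refine ⟨m, eq_top_iff.2 (hS ▸ Algebra.adjoin_le fun x hx => ?_)⟩
    refine GradedAlgebra.mem_adjoin_truncation_of_support_subset 𝒜 fun i hi => ?_
    exact Finset.range_subset_range.2 m.le_succ (hm (Finset.mem_biUnion.2 ⟨x, hx, hi⟩))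
end

section
/- Let A be a ring with Jacobson radical J such that A/J is semisimple and J^3 = 0. Let P be a projective left A-module and M a submodule of JP. Then M decomposes as M = N ⊕ X ⊕ Y, where X is a semisimple direct summand of JP, Y is a semisimple direct summand of J^2 P, and N is a submodule containing no simple direct summand. -/
/-! Let `J` be the Jacobson radical and `T ⊆ P` the submodule killed by `J`. Every module killed
by `J` is semisimple because `A/J` is, and `J³ = 0` puts `J²P` inside `T`. Choose `X`
complementing `M ∩ J²P` in `M ∩ T`; since `JP/J²P` is semisimple, `X ⊕ J²P` has a complement
`C ⊇ J²P` in `JP`, and `M = X ⊕ M₁` with `M₁ = M ∩ C` and `M₁ ∩ T ⊆ J²P`. Inside `M₁` choose `Y`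
complementing `JM₁` in `M₁ ∩ J²P`, and `N ⊇ JM₁` complementing `Y` modulo `JM₁`, so that
`N ∩ J²P ⊆ JM₁ = JN`. Finally a module `N` with `N ∩ T ⊆ JN` has no simple summand: a simple
summand `S` with complement `N'` is killed by `J`, so `S ⊆ JN = JN' ⊆ N'`.
-/

open CategoryTheory

noncomputable section

instance (A : Type) [Ring A] : HasExt.{1} (ModuleCat.{0} A) := by
  letI := HasDerivedCategory.standard (ModuleCat.{0} A)
  exact hasExt_of_hasDerivedCategory _

/-- The Jacobson radical of the ring `A`, as a two-sided ideal. -/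
def jrad (A : Type) [Ring A] : TwoSidedIdeal A := TwoSidedIdeal.jacobson ⊥

/-- `A/J` is a semisimple ring. -/
def SemisimpleModJ (A : Type) [Ring A] : Prop :=
  IsSemisimpleRing (jrad A).ringCon.Quotient

/-- The Jacobson radical satisfies `J ^ 3 = 0`. -/
def JCubeZero (A : Type) [Ring A] : Prop :=
  ∀ x y z : A, x ∈ jrad A → y ∈ jrad A → z ∈ jrad A → x * y * z = 0

/-- `A` is semiprimary: `A/J` is semisimple and the Jacobson radical `J` is nilpotent. -/
def IsSemiprimary (A : Type) [Ring A] : Prop :=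
  SemisimpleModJ A ∧
    ∃ n : ℕ, ∀ x : Fin n → A, (∀ i, x i ∈ jrad A) → (List.ofFn x).prod = 0

/-- `A/J` as a left `A`-module, an object of `ModuleCat A`. -/
def AmodJ (A : Type) [Ring A] : ModuleCat.{0} A :=
  ModuleCat.of A (A ⧸ (jrad A).asIdeal)

/-- The submodule `J·N`, for `J` the Jacobson radical of `A` and `N` a submodule of `M`. -/
def jSmul (A : Type) [Ring A] {M : Type} [AddCommGroup M] [Module A M]
    (N : Submodule A M) : Submodule A M :=
  Submodule.span A {y | ∃ x ∈ jrad A, ∃ m ∈ N, y = x • m}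

/-- `M` has projective dimension at most `n`, characterized by vanishing of
`Ext^k(M, -)` for `k > n`. -/
def projDimLE (A : Type) [Ring A] (M : ModuleCat.{0} A) (n : ℕ) : Prop :=
  ∀ (N : ModuleCat.{0} A) (k : ℕ), n < k → Subsingleton (Abelian.Ext M N k)

/-- The projective dimension of `M`, valued in `ℕ∞` (infinite if no bound exists). -/
def projDim (A : Type) [Ring A] (M : ModuleCat.{0} A) : ℕ∞ :=
  sInf {e : ℕ∞ | ∃ n : ℕ, e = n ∧ projDimLE A M n}

/-- `N` has injective dimension at most `n`, characterized by vanishing of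
`Ext^k(-, N)` for `k > n`. -/
def injDimLE (A : Type) [Ring A] (N : ModuleCat.{0} A) (n : ℕ) : Prop :=
  ∀ (M : ModuleCat.{0} A) (k : ℕ), n < k → Subsingleton (Abelian.Ext M N k)

/-- The injective dimension of `N`, valued in `ℕ∞`. -/
def injDim (A : Type) [Ring A] (N : ModuleCat.{0} A) : ℕ∞ :=
  sInf {e : ℕ∞ | ∃ n : ℕ, e = n ∧ injDimLE A N n}

/-- The (left) global dimension of `A`: the supremum of projective dimensions of
all left `A`-modules. -/
def globalDim (A : Type) [Ring A] : ℕ∞ :=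
  ⨆ M : ModuleCat.{0} A, projDim A M

/-- `N` is the (first) syzygy of `M`: `N` is isomorphic to the kernel of a
projective cover `P → M` (a surjection from a projective module with superfluous
kernel, i.e. kernel contained in `J·P`). -/
def IsSyzygy (A : Type) [Ring A] (M N : ModuleCat.{0} A) : Prop :=
  ∃ (P : ModuleCat.{0} A) (f : P →ₗ[A] M), Module.Projective A P ∧
    Function.Surjective f ∧ LinearMap.ker f ≤ jSmul A (⊤ : Submodule A P) ∧
    Nonempty (N ≃ₗ[A] LinearMap.ker f)

/-- `N` is the `n`-th syzygy `Ω^n M` of `M` in its minimal projective resolution. -/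
def IsNthSyzygy (A : Type) [Ring A] : ℕ → ModuleCat.{0} A → ModuleCat.{0} A → Prop
  | 0, M, N => Nonempty (M ≃ₗ[A] N)
  | n + 1, M, N => ∃ K : ModuleCat.{0} A, IsNthSyzygy A n M K ∧ IsSyzygy A K N

/-- `S` is (isomorphic to) a direct summand of the module `W`. -/
def IsDirectSummandOf (A : Type) [Ring A] (S W : ModuleCat.{0} A) : Prop :=
  ∃ U V : Submodule A W, IsCompl U V ∧ Nonempty (S ≃ₗ[A] U)

/-- The submodule `X` is a direct summand of the submodule `W` (inside a common
ambient module). -/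
def IsSummandIn (A : Type) [Ring A] {P : Type} [AddCommGroup P] [Module A P]
    (X W : Submodule A P) : Prop :=
  X ≤ W ∧ ∃ C ≤ W, X ⊓ C = ⊥ ∧ X ⊔ C = W

/-- The module `N` (a submodule of an ambient module) has no simple direct summand. -/
def NoSimpleSummand (A : Type) [Ring A] {P : Type} [AddCommGroup P] [Module A P]
    (N : Submodule A P) : Prop :=
  ¬ ∃ S : Submodule A P, IsSimpleModule A S ∧ IsSummandIn A S N

/-- The order relation on simple modules: `S ⪯ T` iff `S` is a direct summand of
some syzygy `Ω^m T`. -/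
def Preceq (A : Type) [Ring A] (S T : ModuleCat.{0} A) : Prop :=
  ∃ (m : ℕ) (W : ModuleCat.{0} A), IsNthSyzygy A m T W ∧ IsDirectSummandOf A S W

/-- `Ext_A^n(S, S) = 0` for every simple `A`-module `S` and every `n ≥ m`. -/
def ExtSelfVanishes (A : Type) [Ring A] (m : ℕ) : Prop :=
  ∀ S : ModuleCat.{0} A, IsSimpleModule A S →
    ∀ n : ℕ, m ≤ n → Subsingleton (Abelian.Ext S S n)

/-- The Yoneda ring `E = ⊕ₙ Ext^n(A/J, A/J)` is generated in finite degrees: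
there is `s` such that every homogeneous element of degree `n > s` is a sum of
Yoneda products of homogeneous elements of positive degrees `< n`. -/
def YonedaGeneratedInFiniteDegrees (A : Type) [Ring A] : Prop :=
  ∃ s : ℕ, ∀ n : ℕ, s < n → ∀ e : Abelian.Ext (AmodJ A) (AmodJ A) n,
    e ∈ AddSubgroup.closure {x : Abelian.Ext (AmodJ A) (AmodJ A) n |
      ∃ (i j : ℕ) (h : i + j = n) (_ : 0 < i) (_ : 0 < j)
        (a : Abelian.Ext (AmodJ A) (AmodJ A) i)
        (b : Abelian.Ext (AmodJ A) (AmodJ A) j), x = a.comp b h}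

/-- The data of the canonical sequence `(M₀ = S, M₁, M₂, ...)` associated to a
simple module `S` over a ring with `J³ = 0`: for each `n`, `P n` is a projective
cover of `M n`, and its kernel (the syzygy `Ω M_n`) decomposes as
`M_{n+1} ⊕ Y_{n+1}`, where `Y_{n+1}` is a direct summand of `J²·P n` and
`M_{n+1} ∩ J²·P n = J·M_{n+1}`. -/
structure AssocSeqData (A : Type) [Ring A] (S : ModuleCat.{0} A) where
  M : ℕ → ModuleCat.{0} A
  iso0 : Nonempty (M 0 ≃ₗ[A] S)
  P : ℕ → ModuleCat.{0} A
  proj : ∀ n, Module.Projective A (P n)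
  π : ∀ n, P n →ₗ[A] M n
  surj : ∀ n, Function.Surjective (π n)
  cover : ∀ n, LinearMap.ker (π n) ≤ jSmul A (⊤ : Submodule A (P n))
  Msub : ∀ n, Submodule A (P n)
  Ysub : ∀ n, Submodule A (P n)
  isoM : ∀ n, Nonempty (M (n + 1) ≃ₗ[A] Msub n)
  indep : ∀ n, Msub n ⊓ Ysub n = ⊥
  sup_eq : ∀ n, Msub n ⊔ Ysub n = LinearMap.ker (π n)
  Y_summand : ∀ n, IsSummandIn A (Ysub n) (jSmul A (jSmul A (⊤ : Submodule A (P n))))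
  M_cap : ∀ n, Msub n ⊓ jSmul A (jSmul A (⊤ : Submodule A (P n))) = jSmul A (Msub n)

/-- The iterated Yoneda product `eₙ · ... · e₂ · e₁ · 1` of classes
`eᵢ ∈ Ext^1(S_{i-1}, S_i)`. -/
def extChain (A : Type) [Ring A] (S : ℕ → ModuleCat.{0} A)
    (e : ∀ i : ℕ, Abelian.Ext (S i) (S (i + 1)) 1) :
    ∀ n : ℕ, Abelian.Ext (S 0) (S n) n
  | 0 => Abelian.Ext.mk₀ (𝟙 (S 0))
  | n + 1 => (extChain A S e n).comp (e n) rfl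

/-- The iterated Yoneda product `eₙ · ... · e₁ · f` where `f ∈ Ext^0(S, A/J)` and
`eᵢ ∈ Ext^1(A/J, A/J)`. -/
def extChainFrom (A : Type) [Ring A] {S : ModuleCat.{0} A}
    (f : Abelian.Ext S (AmodJ A) 0)
    (e : ℕ → Abelian.Ext (AmodJ A) (AmodJ A) 1) :
    ∀ n : ℕ, Abelian.Ext S (AmodJ A) n
  | 0 => f
  | n + 1 => (extChainFrom A f e n).comp (e n) rfl

open Submodule

section Radical

variable {A : Type} [Ring A]

theorem asIdeal_jrad : (jrad A).asIdeal = Ring.jacobson A := by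
  rw [jrad, TwoSidedIdeal.asIdeal_jacobson, TwoSidedIdeal.bot_asIdeal, Ideal.jacobson_bot]

theorem mem_jrad_iff {x : A} : x ∈ jrad A ↔ x ∈ Ring.jacobson A := by
  rw [← asIdeal_jrad, TwoSidedIdeal.mem_asIdeal]

theorem jSmul_eq_jacobson_smul {M : Type} [AddCommGroup M] [Module A M] (N : Submodule A M) :
    jSmul A N = Ring.jacobson A • N :=
  le_antisymm
    (span_le.2 fun _ ⟨_, hx, _, hm, hy⟩ ↦ hy ▸ smul_mem_smul (mem_jrad_iff.1 hx) hm)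
    (smul_le.2 fun _ hr _ hn ↦ subset_span ⟨_, mem_jrad_iff.2 hr, _, hn, rfl⟩)

theorem SemisimpleModJ.isSemisimpleRing (hss : SemisimpleModJ A) :
    IsSemisimpleRing (A ⧸ Ring.jacobson A) := by
  have : IsSemisimpleRing (jrad A).ringCon.Quotient := hss
  refine (RingCon.congr (RingEquiv.refl A) (c := (jrad A).ringCon)
    (d := Ideal.Quotient.ringCon (Ring.jacobson A)) ?_).isSemisimpleRing
  ext x y
  rw [TwoSidedIdeal.rel_iff, mem_jrad_iff]
  exact (Submodule.quotientRel_def _).symm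

theorem JCubeZero.jacobson_mul_mul_eq_bot (h3 : JCubeZero A) :
    Ring.jacobson A * Ring.jacobson A * Ring.jacobson A = ⊥ := by
  refine eq_bot_iff.2 (Ideal.mul_le.2 fun r hr z hz ↦ ?_)
  refine Submodule.mul_induction_on (C := fun r ↦ r * z ∈ (⊥ : Ideal A)) hr ?_ ?_
  · exact fun x hx y hy ↦ h3 x y z (mem_jrad_iff.2 hx) (mem_jrad_iff.2 hy) (mem_jrad_iff.2 hz)
  · exact fun a b ha hb ↦ (add_mul a b z).symm ▸ add_mem ha hb

theorem JCubeZero.jacobson_smul_smul_smul_eq_bot (h3 : JCubeZero A)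
    {P : Type} [AddCommGroup P] [Module A P] (N : Submodule A P) :
    Ring.jacobson A • Ring.jacobson A • Ring.jacobson A • N = ⊥ := by
  rw [← Submodule.mul_smul, ← Submodule.mul_smul, h3.jacobson_mul_mul_eq_bot, bot_smul]

end Radical

namespace Submodule

variable {A : Type} [Ring A] {P : Type} [AddCommGroup P] [Module A P]

def annihilatedBy (I : Ideal A) [I.IsTwoSided] (P : Type) [AddCommGroup P] [Module A P] :
    Submodule A P where
  carrier := {p | ∀ a ∈ I, a • p = 0}
  add_mem' ha hb a haI := by rw [smul_add, ha a haI, hb a haI, add_zero]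
  zero_mem' a _ := smul_zero a
  smul_mem' r p hp a haI := by rw [smul_smul]; exact hp _ (I.mul_mem_right r haI)

theorem le_annihilatedBy_iff {I : Ideal A} [I.IsTwoSided] {V : Submodule A P} :
    V ≤ annihilatedBy I P ↔ I • V = ⊥ := by
  rw [eq_bot_iff, smul_le]
  exact ⟨fun h r hr v hv ↦ (mem_bot A).2 (h hv r hr), fun h v hv r hr ↦ (mem_bot A).1 (h r hr v hv)⟩

theorem isSemisimpleModule_of_smul_eq_bot {I : Ideal A} [I.IsTwoSided] [IsSemisimpleRing (A ⧸ I)]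
    {V : Submodule A P} (hV : I • V = ⊥) : IsSemisimpleModule A V := by
  have hI : Module.IsTorsionBySet A V I := fun v a ↦
    Subtype.ext (le_annihilatedBy_iff.2 hV v.2 a a.2)
  let := hI.module
  exact hI.isSemisimpleModule_iff.1 inferInstance

theorem exists_compl_le_of_isSemisimpleModule {U W : Submodule A P} (hUW : U ≤ W)
    [IsSemisimpleModule A W] : ∃ C ≤ W, U ⊓ C = ⊥ ∧ U ⊔ C = W := by
  have : ComplementedLattice (Set.Iic W) := W.mapIic.complementedLattice_iff.1 inferInstance
  obtain ⟨C, hC⟩ := ComplementedLattice.exists_isCompl (⟨U, hUW⟩ : Set.Iic W)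
  exact ⟨C, C.2, congrArg Subtype.val hC.inf_eq_bot, congrArg Subtype.val hC.sup_eq_top⟩

theorem exists_compl_of_isSemisimpleModule_map_mkQ {K U W : Submodule A P} (hUW : U ≤ W)
    (hKW : K ≤ W) (hUK : U ⊓ K = ⊥) [IsSemisimpleModule A (W.map K.mkQ)] :
    ∃ C, K ≤ C ∧ C ≤ W ∧ U ⊓ C = ⊥ ∧ U ⊔ C = W := by
  obtain ⟨C, hCW, hUC, hUCW⟩ := exists_compl_le_of_isSemisimpleModule (map_mono (f := K.mkQ) hUW)
  have hK : K ≤ C.comap K.mkQ := by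
    intro k hk
    rw [mem_comap, mkQ_apply, (Quotient.mk_eq_zero K).2 hk]
    exact C.zero_mem
  have hW : (W.map K.mkQ).comap K.mkQ = W := by rw [comap_map_mkQ, sup_eq_right.2 hKW]
  refine ⟨C.comap K.mkQ, hK, hW ▸ comap_mono hCW, ?_, ?_⟩
  · rw [eq_bot_iff, ← hUK]
    refine le_inf inf_le_left ?_
    calc U ⊓ C.comap K.mkQ ≤ (U.map K.mkQ).comap K.mkQ ⊓ C.comap K.mkQ :=
          inf_le_inf_right _ (le_comap_map _ _)
      _ = K := by rw [← comap_inf, hUC, ← LinearMap.ker, ker_mkQ]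
  · calc U ⊔ C.comap K.mkQ = ((U ⊔ C.comap K.mkQ).map K.mkQ).comap K.mkQ := by
          rw [comap_map_mkQ, sup_eq_right.2 (hK.trans le_sup_right)]
      _ = W := by
          rw [map_sup, map_comap_eq_of_surjective K.mkQ_surjective, hUCW, hW]

theorem exists_compl_of_smul_le {I : Ideal A} [I.IsTwoSided] [IsSemisimpleRing (A ⧸ I)]
    {K U W : Submodule A P} (hUW : U ≤ W) (hKW : K ≤ W) (hUK : U ⊓ K = ⊥) (hW : I • W ≤ K) :
    ∃ C, K ≤ C ∧ C ≤ W ∧ U ⊓ C = ⊥ ∧ U ⊔ C = W := by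
  have : IsSemisimpleModule A (W.map K.mkQ) := isSemisimpleModule_of_smul_eq_bot (I := I) <| by
    rw [← map_smul'', eq_bot_iff, ← mkQ_map_self K]
    exact map_mono hW
  exact exists_compl_of_isSemisimpleModule_map_mkQ hUW hKW hUK

theorem jacobson_smul_eq_bot_of_isSimpleModule {S : Submodule A P} [IsSimpleModule A S] :
    Ring.jacobson A • S = ⊥ := by
  rw [eq_bot_iff, smul_le]
  intro r hr s hs
  have := Module.mem_annihilator.1 (IsSemisimpleModule.jacobson_le_annihilator A S hr) ⟨s, hs⟩
  exact (mem_bot A).2 (congrArg Subtype.val this)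

theorem noSimpleSummand_of_inf_annihilatedBy_le {N : Submodule A P}
    (h : N ⊓ annihilatedBy (Ring.jacobson A) P ≤ Ring.jacobson A • N) : NoSimpleSummand A N := by
  rintro ⟨S, hS, hSN, N', -, hdisj, hsup⟩
  have hJS : Ring.jacobson A • S = ⊥ := jacobson_smul_eq_bot_of_isSimpleModule
  have hSN' : S ≤ N' :=
    calc S ≤ N ⊓ annihilatedBy (Ring.jacobson A) P := le_inf hSN (le_annihilatedBy_iff.2 hJS)
      _ ≤ Ring.jacobson A • N := h
      _ = Ring.jacobson A • N' := by rw [← hsup, smul_sup, hJS, bot_sup_eq]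
      _ ≤ N' := smul_le_right
  have hS0 : S = ⊥ := by rw [eq_bot_iff, ← hdisj]; exact le_inf le_rfl hSN'
  exact nontrivial_iff_ne_bot.1 (IsSimpleModule.nontrivial A S) hS0

variable {I : Ideal A} [I.IsTwoSided] [IsSemisimpleRing (A ⧸ I)]

theorem exists_sup_eq_inf_annihilatedBy_le {M W Z : Submodule A P} (hMW : M ≤ W)
    (hZW : Z ≤ W) (hWZ : I • W ≤ Z) (hZ : I • Z = ⊥) :
    ∃ X M₁ : Submodule A P, X ≤ M ∧ I • X = ⊥ ∧ IsSummandIn A X W ∧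
      X ⊓ M₁ = ⊥ ∧ X ⊔ M₁ = M ∧ M₁ ⊓ annihilatedBy I P ≤ Z := by
  have : IsSemisimpleModule A ↥(M ⊓ annihilatedBy I P) :=
    isSemisimpleModule_of_smul_eq_bot (le_annihilatedBy_iff.1 inf_le_right)
  obtain ⟨X, hXT, hZX, hZXT⟩ :=
    exists_compl_le_of_isSemisimpleModule (inf_le_inf_left M (le_annihilatedBy_iff.2 hZ))
  have hXM : X ≤ M := hXT.trans inf_le_left
  have hXZ : X ⊓ Z = ⊥ := by
    rw [eq_bot_iff, ← hZX]
    exact le_inf (le_inf (inf_le_left.trans hXM) inf_le_right) inf_le_left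
  obtain ⟨C, hZC, hCW, hXC, hXCW⟩ := exists_compl_of_smul_le (hXM.trans hMW) hZW hXZ hWZ
  refine ⟨X, M ⊓ C, hXM, le_annihilatedBy_iff.1 (hXT.trans inf_le_right),
    ⟨hXM.trans hMW, C, hCW, hXC, hXCW⟩, eq_bot_iff.2 (hXC ▸ inf_le_inf_left X inf_le_right), ?_, ?_⟩
  · rw [inf_comm, ← sup_inf_assoc_of_le C hXM, hXCW, inf_eq_right.2 hMW]
  · calc M ⊓ C ⊓ annihilatedBy I P = (M ⊓ Z ⊔ X) ⊓ C := by rw [hZXT, inf_right_comm]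
      _ = M ⊓ Z := by
        rw [sup_inf_assoc_of_le X (inf_le_right.trans hZC), hXC, sup_bot_eq]
      _ ≤ Z := inf_le_right

theorem exists_sup_eq_inf_le_smul {M Z : Submodule A P} (hMZ : I • M ≤ Z) (hZ : I • Z = ⊥) :
    ∃ Y N : Submodule A P, Y ≤ M ∧ I • Y = ⊥ ∧ IsSummandIn A Y Z ∧
      Y ⊓ N = ⊥ ∧ Y ⊔ N = M ∧ N ⊓ Z ≤ I • N := by
  have : IsSemisimpleModule A Z := isSemisimpleModule_of_smul_eq_bot hZ
  have : IsSemisimpleModule A ↥(M ⊓ Z) :=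
    isSemisimpleModule_of_smul_eq_bot (le_bot_iff.1 ((smul_mono le_rfl inf_le_right).trans hZ.le))
  obtain ⟨Y, hYMZ, hIMY, hIMYMZ⟩ :=
    exists_compl_le_of_isSemisimpleModule (le_inf smul_le_right hMZ : I • M ≤ M ⊓ Z)
  have hYZ : Y ≤ Z := hYMZ.trans inf_le_right
  obtain ⟨Y', hY'Z, hYY', hYY'Z⟩ := exists_compl_le_of_isSemisimpleModule hYZ
  obtain ⟨N, hIMN, hNM, hYN, hYNM⟩ := exists_compl_of_smul_le (hYMZ.trans inf_le_left)
    smul_le_right (by rw [inf_comm]; exact hIMY) le_rfl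
  have hIY : I • Y = ⊥ := le_bot_iff.1 ((smul_mono le_rfl hYZ).trans hZ.le)
  refine ⟨Y, N, hYMZ.trans inf_le_left, hIY, ⟨hYZ, Y', hY'Z, hYY', hYY'Z⟩, hYN, hYNM, ?_⟩
  refine le_of_eq ?_
  calc N ⊓ Z = (I • M ⊔ Y) ⊓ N := by rw [hIMYMZ, inf_right_comm, inf_eq_right.2 hNM]
    _ = I • M := by rw [sup_inf_assoc_of_le Y hIMN, hYN, sup_bot_eq]
    _ = I • N := by rw [← hYNM, smul_sup, hIY, bot_sup_eq]

end Submodule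

theorem sup_sup_eq_and_disjoint_of_nested {α : Type*} [Lattice α] [OrderBot α]
    [IsModularLattice α] {x y n m₁ m : α} (hxm₁ : x ⊓ m₁ = ⊥) (hxm₁m : x ⊔ m₁ = m)
    (hyn : y ⊓ n = ⊥) (hynm₁ : y ⊔ n = m₁) :
    n ⊓ (x ⊔ y) = ⊥ ∧ x ⊓ y = ⊥ ∧ n ⊔ x ⊔ y = m := by
  have hym₁ : y ≤ m₁ := hynm₁ ▸ le_sup_left
  refine ⟨?_, eq_bot_iff.2 (hxm₁ ▸ inf_le_inf_left x hym₁), ?_⟩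
  · have hnm₁ : n ≤ m₁ := hynm₁ ▸ le_sup_right
    have hy : n ⊓ (x ⊔ y) ≤ y :=
      calc n ⊓ (x ⊔ y) ≤ (y ⊔ x) ⊓ m₁ :=
            le_inf (sup_comm x y ▸ inf_le_right) (inf_le_left.trans hnm₁)
        _ = y := by rw [sup_inf_assoc_of_le x hym₁, hxm₁, sup_bot_eq]
    rw [eq_bot_iff, ← hyn]
    exact le_inf hy inf_le_left
  · rw [sup_comm n, sup_assoc, sup_comm n, hynm₁, hxm₁m]

theorem stmt_7_general (A : Type) [Ring A] (hss : SemisimpleModJ A) (h3 : JCubeZero A)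
    (P : Type) [AddCommGroup P] [Module A P]
    (M : Submodule A P) (hM : M ≤ jSmul A (⊤ : Submodule A P)) :
    ∃ N X Y : Submodule A P,
      N ≤ M ∧ X ≤ M ∧ Y ≤ M ∧
      N ⊓ (X ⊔ Y) = ⊥ ∧ X ⊓ Y = ⊥ ∧ N ⊔ X ⊔ Y = M ∧
      IsSemisimpleModule A X ∧ IsSummandIn A X (jSmul A (⊤ : Submodule A P)) ∧
      IsSemisimpleModule A Y ∧
      IsSummandIn A Y (jSmul A (jSmul A (⊤ : Submodule A P))) ∧
      NoSimpleSummand A N := by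
  have := hss.isSemisimpleRing
  simp only [jSmul_eq_jacobson_smul] at hM ⊢
  have hJ3 := h3.jacobson_smul_smul_smul_eq_bot (⊤ : Submodule A P)
  obtain ⟨X, M₁, hXM, hJX, hX, hXM₁, hXM₁M, hM₁⟩ :=
    exists_sup_eq_inf_annihilatedBy_le hM smul_le_right le_rfl hJ3
  have hM₁M : M₁ ≤ M := hXM₁M ▸ le_sup_right
  obtain ⟨Y, N, hYM₁, hJY, hY, hYN, hYNM₁, hN⟩ :=
    exists_sup_eq_inf_le_smul (smul_mono le_rfl (hM₁M.trans hM)) hJ3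
  have hNM₁ : N ≤ M₁ := hYNM₁ ▸ le_sup_right
  obtain ⟨hNXY, hXY, hNXYM⟩ := sup_sup_eq_and_disjoint_of_nested hXM₁ hXM₁M hYN hYNM₁
  refine ⟨N, X, Y, hNM₁.trans hM₁M, hXM, hYM₁.trans hM₁M, hNXY, hXY, hNXYM,
    isSemisimpleModule_of_smul_eq_bot hJX, hX, isSemisimpleModule_of_smul_eq_bot hJY, hY,
    noSimpleSummand_of_inf_annihilatedBy_le ?_⟩
  exact (le_inf inf_le_left ((inf_le_inf_right _ hNM₁).trans hM₁)).trans hN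

/-- Decomposition lemma: over a ring with `A/J` semisimple and `J³ = 0`, any
submodule `M` of `J·P` (`P` projective) decomposes as `M = N ⊕ X ⊕ Y` with `X` a
semisimple direct summand of `J·P`, `Y` a semisimple direct summand of `J²·P`,
and `N` containing no simple direct summand. -/
theorem stmt_7 (A : Type) [Ring A] (hss : SemisimpleModJ A) (h3 : JCubeZero A)
    (P : Type) [AddCommGroup P] [Module A P] (hP : Module.Projective A P)
    (M : Submodule A P) (hM : M ≤ jSmul A (⊤ : Submodule A P)) :
    ∃ N X Y : Submodule A P,
      N ≤ M ∧ X ≤ M ∧ Y ≤ M ∧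
      N ⊓ (X ⊔ Y) = ⊥ ∧ X ⊓ Y = ⊥ ∧ N ⊔ X ⊔ Y = M ∧
      IsSemisimpleModule A X ∧ IsSummandIn A X (jSmul A (⊤ : Submodule A P)) ∧
      IsSemisimpleModule A Y ∧
      IsSummandIn A Y (jSmul A (jSmul A (⊤ : Submodule A P))) ∧
      NoSimpleSummand A N :=
  stmt_7_general A hss h3 P M hM
end
end

section
/- Let A be a ring with Jacobson radical J such that A/J is semisimple and J^3 = 0, let P be a projective left A-module, and let M ⊆ JP be a submodule with decomposition M = N ⊕ X ⊕ Y as in the structure lemma (X a semisimple summand of JP, Y a semisimple summand of J^2 P, N with no simple direct summand). Then M ∩ J^2 P = JM if and only if Y = 0. -/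
open CategoryTheory

noncomputable section

section Aux

variable {A : Type} [Ring A] {P : Type} [AddCommGroup P] [Module A P]

lemma smul_mem_jSmul {x : A} (hx : x ∈ jrad A) {m : P} {N : Submodule A P} (hm : m ∈ N) :
    x • m ∈ jSmul A N :=
  Submodule.subset_span ⟨x, hx, m, hm, rfl⟩

lemma jSmul_le {N K : Submodule A P}
    (h : ∀ x ∈ jrad A, ∀ m ∈ N, x • m ∈ K) : jSmul A N ≤ K := by
  apply Submodule.span_le.mpr
  rintro y ⟨x, hx, m, hm, rfl⟩
  exact h x hx m hm

lemma jSmul_le_self (N : Submodule A P) : jSmul A N ≤ N :=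
  jSmul_le fun x _ m hm => N.smul_mem x hm

lemma jSmul_mono {N N' : Submodule A P} (h : N ≤ N') : jSmul A N ≤ jSmul A N' :=
  jSmul_le fun _ hx _ hm => smul_mem_jSmul hx (h hm)

lemma jSmul_sup (N X : Submodule A P) : jSmul A (N ⊔ X) = jSmul A N ⊔ jSmul A X := by
  refine le_antisymm (jSmul_le ?_) (sup_le (jSmul_mono le_sup_left) (jSmul_mono le_sup_right))
  intro x hx m hm
  obtain ⟨a, ha, b, hb, rfl⟩ := Submodule.mem_sup.mp hm
  rw [smul_add]
  exact Submodule.add_mem _ (Submodule.mem_sup_left (smul_mem_jSmul hx ha))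
    (Submodule.mem_sup_right (smul_mem_jSmul hx hb))

lemma jrad_ann_simple {S : Type} [AddCommGroup S] [Module A S]
    (hS : IsSimpleModule A S) {x : A} (hx : x ∈ jrad A) (s : S) : x • s = 0 := by
  haveI := hS
  by_cases hs : s = 0
  · rw [hs, smul_zero]
  set f : A →ₗ[A] S := LinearMap.toSpanSingleton A S s with hf
  have hrange : LinearMap.range f = ⊤ := by
    rcases eq_bot_or_eq_top (LinearMap.range f) with h | h
    · exfalso
      apply hs
      have h1 : f 1 ∈ LinearMap.range f := ⟨1, rfl⟩
      rw [h, Submodule.mem_bot] at h1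
      simpa [hf, LinearMap.toSpanSingleton_apply] using h1
    · exact h
  have hsur : Function.Surjective f := LinearMap.range_eq_top.mp hrange
  have hco : IsCoatom (LinearMap.ker f) := by
    rw [← isSimpleModule_iff_isCoatom]
    exact IsSimpleModule.congr (f.quotKerEquivOfSurjective hsur)
  have hmax : Ideal.IsMaximal (LinearMap.ker f) := Ideal.isMaximal_def.mpr hco
  have hx' : x ∈ Ideal.jacobson (⊥ : Ideal A) := by
    have h1 : x ∈ TwoSidedIdeal.asIdeal (jrad A) := TwoSidedIdeal.mem_asIdeal.mpr hx
    rw [jrad, TwoSidedIdeal.asIdeal_jacobson] at h1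
    have hbot : TwoSidedIdeal.asIdeal (⊥ : TwoSidedIdeal A) = (⊥ : Ideal A) := by
      ext y
      simp [TwoSidedIdeal.mem_asIdeal, TwoSidedIdeal.mem_bot]
    rwa [hbot] at h1
  have hker : x ∈ LinearMap.ker f := by
    rw [Ideal.jacobson] at hx'
    exact Submodule.mem_sInf.mp hx' _ ⟨bot_le, hmax⟩
  simpa [hf, LinearMap.toSpanSingleton_apply] using hker

lemma jrad_ann_semisimple {V : Type} [AddCommGroup V] [Module A V]
    (hV : IsSemisimpleModule A V) {x : A} (hx : x ∈ jrad A) (v : V) : x • v = 0 := by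
  haveI := hV
  have hmem : v ∈ (⊤ : Submodule A V) := Submodule.mem_top
  rw [← IsSemisimpleModule.sSup_simples_eq_top A V, sSup_eq_iSup'] at hmem
  refine Submodule.iSup_induction (motive := fun w => ∀ z ∈ jrad A, z • w = 0) _ hmem ?_ ?_ ?_ x hx
  · rintro ⟨S, hS⟩ w hw z hz
    have := jrad_ann_simple (A := A) (S := S) hS hz ⟨w, hw⟩
    simpa using congrArg (Submodule.subtype S) this
  · intro z _; rw [smul_zero]
  · intro a b ha hb z hz
    rw [smul_add, ha z hz, hb z hz, add_zero]

lemma jrad_smul_eq_zero_of_mem_semisimple {X : Submodule A P}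
    (hX : IsSemisimpleModule A X) {x : A} (hx : x ∈ jrad A) {m : P} (hm : m ∈ X) :
    x • m = 0 := by
  have := jrad_ann_semisimple hX hx (⟨m, hm⟩ : X)
  simpa using congrArg (Submodule.subtype X) this

lemma jSmul_eq_bot_of_isSemisimple {X : Submodule A P} (hX : IsSemisimpleModule A X) :
    jSmul A X = ⊥ := by
  rw [eq_bot_iff]
  apply jSmul_le
  intro x hx m hm
  rw [jrad_smul_eq_zero_of_mem_semisimple hX hx hm]
  exact Submodule.zero_mem _

lemma complementedLattice_of_jrad_torsion (hss : SemisimpleModJ A)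
    {V : Type} [AddCommGroup V] [Module A V]
    (hann : ∀ x ∈ jrad A, ∀ v : V, x • v = 0) :
    ComplementedLattice (Submodule A V) := by
  set c := (jrad A).ringCon with hc
  letI : SMul c.Quotient V :=
    ⟨fun r v => Quotient.liftOn r (fun a => a • v) (fun a b hab => by
      have hmem : a - b ∈ jrad A := (TwoSidedIdeal.rel_iff _ _ _).mp hab
      have h0 := hann _ hmem v
      rw [sub_smul, sub_eq_zero] at h0
      exact h0)⟩
  have hsur : Function.Surjective (RingCon.mk' c) := fun r =>
    Quotient.inductionOn r fun a => ⟨a, rfl⟩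
  letI : Module c.Quotient V := hsur.moduleLeft _ fun a x => rfl
  haveI : IsSemisimpleRing c.Quotient := hss
  haveI : IsSemisimpleModule c.Quotient V := inferInstance
  constructor
  intro U
  let U' : Submodule c.Quotient V :=
    { carrier := U
      add_mem' := fun h1 h2 => U.add_mem h1 h2
      zero_mem' := U.zero_mem
      smul_mem' := by
        intro r v hv
        obtain ⟨a, rfl⟩ := hsur r
        exact U.smul_mem a hv }
  obtain ⟨W', hW'⟩ := exists_isCompl U'
  let W : Submodule A V :=
    { carrier := W'
      add_mem' := fun h1 h2 => W'.add_mem h1 h2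
      zero_mem' := W'.zero_mem
      smul_mem' := fun a v hv => W'.smul_mem (RingCon.mk' c a) hv }
  refine ⟨W, ?_, ?_⟩
  · rw [Submodule.disjoint_def]
    intro v h1 h2
    exact Submodule.disjoint_def.mp hW'.disjoint v h1 h2
  · rw [codisjoint_iff, eq_top_iff]
    intro v _
    have : v ∈ U' ⊔ W' := by rw [hW'.codisjoint.eq_top]; trivial
    obtain ⟨y, hy, z, hz, rfl⟩ := Submodule.mem_sup.mp this
    exact Submodule.mem_sup.mpr ⟨y, hy, z, hz, rfl⟩

lemma jj_smul_aux (h3 : JCubeZero A) :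
    ∀ w ∈ jSmul A (⊤ : Submodule A P), ∀ c ∈ jrad A, ∀ d ∈ jrad A, (c * d) • w = (0 : P) := by
  intro w hw
  refine Submodule.span_induction (p := fun w _ => ∀ c ∈ jrad A, ∀ d ∈ jrad A, (c * d) • w = (0 : P))
    ?_ ?_ ?_ ?_ hw
  · rintro y ⟨x, hx, m, _, rfl⟩ c hc d hd
    rw [smul_smul, h3 c d x hc hd hx, zero_smul]
  · intro c _ d _; rw [smul_zero]
  · intro a b _ _ ha hb c hc d hd
    rw [smul_add, ha c hc d hd, hb c hc d hd, add_zero]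
  · intro a w _ ih c hc d hd
    have hda : d * a ∈ jrad A := TwoSidedIdeal.mul_mem_right _ _ _ hd
    have heq : (c * d) • (a • w) = (c * (d * a)) • w := by
      rw [smul_smul, mul_assoc]
    rw [heq]
    exact ih c hc (d * a) hda

lemma jj_ann (h3 : JCubeZero A) :
    ∀ w ∈ jSmul A (jSmul A (⊤ : Submodule A P)), ∀ z ∈ jrad A, z • w = (0 : P) := by
  intro w hw
  refine Submodule.span_induction (p := fun w _ => ∀ z ∈ jrad A, z • w = (0 : P))
    ?_ ?_ ?_ ?_ hw
  · rintro y ⟨x, hx, m, hm, rfl⟩ z hz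
    rw [smul_smul]
    exact jj_smul_aux h3 m hm z hz x hx
  · intro z _; rw [smul_zero]
  · intro a b _ _ ha hb z hz
    rw [smul_add, ha z hz, hb z hz, add_zero]
  · intro a w _ ih z hz
    rw [smul_smul]
    have hza : z * a ∈ jrad A := TwoSidedIdeal.mul_mem_right _ _ _ hz
    exact ih (z * a) hza

lemma exists_compl_submodule (hss : SemisimpleModJ A) {N S : Submodule A P}
    (hSN : S ≤ N) (hdisj : S ⊓ jSmul A N = ⊥) :
    ∃ D ≤ N, S ⊓ D = ⊥ ∧ S ⊔ D = N := by
  classical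
  set JN : Submodule A ↥N := (jSmul A N).comap N.subtype with hJN
  haveI : ComplementedLattice (Submodule A (↥N ⧸ JN)) := by
    apply complementedLattice_of_jrad_torsion hss
    intro x hx v
    obtain ⟨n, rfl⟩ := Submodule.Quotient.mk_surjective JN v
    rw [← Submodule.Quotient.mk_smul, Submodule.Quotient.mk_eq_zero]
    exact Submodule.mem_comap.mpr (smul_mem_jSmul hx n.2)
  set S0 : Submodule A ↥N := S.comap N.subtype with hS0
  set mk : ↥N →ₗ[A] ↥N ⧸ JN := JN.mkQ with hmk
  obtain ⟨DQ, hDQ⟩ := exists_isCompl (S0.map mk)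
  set D' : Submodule A ↥N := DQ.comap mk with hD'
  have hmapS0 : S0.map N.subtype = S := by
    rw [hS0, Submodule.map_comap_subtype, inf_eq_right.mpr hSN]
  have hinf : S0 ⊓ D' = ⊥ := by
    rw [eq_bot_iff]
    rintro x ⟨hx1, hx2⟩
    have h1 : mk x ∈ S0.map mk := Submodule.mem_map_of_mem hx1
    have h2 : mk x ∈ DQ := hx2
    have h0 : mk x = 0 := Submodule.disjoint_def.mp hDQ.disjoint _ h1 h2
    have hker : x ∈ JN := by
      rwa [Submodule.mkQ_apply, Submodule.Quotient.mk_eq_zero] at h0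
    have : (x : P) ∈ S ⊓ jSmul A N := ⟨hx1, hker⟩
    rw [hdisj, Submodule.mem_bot] at this
    exact Submodule.mem_bot (R := A) |>.mpr (Subtype.ext this)
  have hsup : S0 ⊔ D' = ⊤ := by
    rw [eq_top_iff]
    intro n _
    have : mk n ∈ S0.map mk ⊔ DQ := by rw [hDQ.codisjoint.eq_top]; trivial
    obtain ⟨y, hy, d, hd, hyd⟩ := Submodule.mem_sup.mp this
    obtain ⟨s, hs, rfl⟩ := Submodule.mem_map.mp hy
    have hnd : n - s ∈ D' := by
      rw [hD', Submodule.mem_comap, map_sub, ← hyd]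
      simpa using hd
    have : n = s + (n - s) := by abel
    rw [this]
    exact Submodule.add_mem _ (Submodule.mem_sup_left hs) (Submodule.mem_sup_right hnd)
  refine ⟨D'.map N.subtype, Submodule.map_subtype_le _ _, ?_, ?_⟩
  · rw [← hmapS0, ← Submodule.map_inf _ (Submodule.injective_subtype N), hinf,
      Submodule.map_bot]
  · rw [← hmapS0, ← Submodule.map_sup, hsup]
    exact Submodule.map_subtype_top N

end Aux

/-- In the decomposition `M = N ⊕ X ⊕ Y` of a submodule `M ≤ J·P` (with `X` a
semisimple summand of `J·P`, `Y` a semisimple summand of `J²·P`, `N` with no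
simple direct summand), one has `M ∩ J²·P = J·M` iff `Y = 0`. -/
theorem stmt_8 (A : Type) [Ring A] (hss : SemisimpleModJ A) (h3 : JCubeZero A)
    (P : Type) [AddCommGroup P] [Module A P] (hP : Module.Projective A P)
    (M N X Y : Submodule A P) (hM : M ≤ jSmul A (⊤ : Submodule A P))
    (hNM : N ≤ M) (hXM : X ≤ M) (hYM : Y ≤ M)
    (h1 : N ⊓ (X ⊔ Y) = ⊥) (h2 : X ⊓ Y = ⊥) (h3' : N ⊔ X ⊔ Y = M)
    (hX : IsSemisimpleModule A X)
    (hXs : IsSummandIn A X (jSmul A (⊤ : Submodule A P)))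
    (hY : IsSemisimpleModule A Y)
    (hYs : IsSummandIn A Y (jSmul A (jSmul A (⊤ : Submodule A P))))
    (hN : NoSimpleSummand A N) :
    M ⊓ jSmul A (jSmul A (⊤ : Submodule A P)) = jSmul A M ↔ Y = ⊥ := by
  set J2P := jSmul A (jSmul A (⊤ : Submodule A P)) with hJ2Pdef
  have hjX : jSmul A X = ⊥ := jSmul_eq_bot_of_isSemisimple hX
  have hjY : jSmul A Y = ⊥ := jSmul_eq_bot_of_isSemisimple hY
  have hjM : jSmul A M = jSmul A N := by
    rw [← h3', jSmul_sup, jSmul_sup, hjX, hjY, sup_bot_eq, sup_bot_eq]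
  have hJMle : jSmul A M ≤ M ⊓ J2P := le_inf (jSmul_le_self M) (jSmul_mono hM)
  constructor
  · intro h
    have hY2 : Y ≤ J2P := hYs.1
    have hle : Y ≤ jSmul A M := by rw [← h]; exact le_inf hYM hY2
    have hYN : Y ≤ N := hle.trans (by rw [hjM]; exact jSmul_le_self N)
    have hfin : Y ≤ N ⊓ (X ⊔ Y) := le_inf hYN le_sup_right
    rw [h1] at hfin
    exact le_bot_iff.mp hfin
  · intro hY0
    subst hY0
    rw [sup_bot_eq] at h3'
    rw [sup_bot_eq] at h1
    refine le_antisymm ?_ hJMle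
    obtain ⟨hXJP, C, hCJP, hXC, hXCsup⟩ := hXs
    have hJ2C : J2P ≤ C := by
      rw [hJ2Pdef, ← hXCsup, jSmul_sup, hjX, bot_sup_eq]
      exact jSmul_le_self C
    have hXJ2 : X ⊓ J2P = ⊥ := by
      rw [eq_bot_iff, ← hXC]
      exact inf_le_inf_left X hJ2C
    set W := M ⊓ J2P with hWdef
    have hWJ2 : W ≤ J2P := inf_le_right
    haveI hWcl : ComplementedLattice (Submodule A ↥W) := by
      apply complementedLattice_of_jrad_torsion hss
      intro x hx v
      apply Subtype.ext
      show x • (v : P) = 0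
      exact jj_ann (P := P) h3 (v : P) (show ((v : P) ∈ jSmul A (jSmul A (⊤ : Submodule A P))) from hWJ2 v.2) x hx
    obtain ⟨T', hT'⟩ := exists_isCompl ((jSmul A M).comap W.subtype)
    set T := T'.map W.subtype with hTdef
    have hTW : T ≤ W := Submodule.map_subtype_le _ _
    have hJMW : ((jSmul A M).comap W.subtype).map W.subtype = jSmul A M := by
      rw [Submodule.map_comap_subtype, inf_eq_right.mpr hJMle]
    have hsupW : jSmul A M ⊔ T = W := by
      rw [← hJMW, hTdef, ← Submodule.map_sup, hT'.codisjoint.eq_top,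
        Submodule.map_subtype_top]
    have hinfW : jSmul A M ⊓ T = ⊥ := by
      rw [← hJMW, hTdef, ← Submodule.map_inf _ (Submodule.injective_subtype W),
        hT'.disjoint.eq_bot, Submodule.map_bot]
    have hTbot : T = ⊥ := by
      by_contra hTne
      have hTJ2 : T ≤ J2P := hTW.trans hWJ2
      have hTM : T ≤ M := hTW.trans inf_le_left
      have hTX : T ⊓ X = ⊥ := by
        rw [eq_bot_iff, ← hXJ2]
        exact le_inf inf_le_right (inf_le_left.trans hTJ2)
      set K := (T ⊔ X) ⊓ N with hKdef
      have hKN : K ≤ N := inf_le_right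
      obtain ⟨t, htT, htne⟩ := (Submodule.ne_bot_iff T).mp hTne
      have htM : t ∈ M := hTM htT
      rw [← h3'] at htM
      obtain ⟨n, hnN, ξ, hξX, hnξ⟩ := Submodule.mem_sup.mp htM
      have hnK : n ∈ K := by
        refine Submodule.mem_inf.mpr ⟨?_, hnN⟩
        exact Submodule.mem_sup.mpr ⟨t, htT, -ξ, Submodule.neg_mem _ hξX, by
          rw [← hnξ]; abel⟩
      have hnne : n ≠ 0 := by
        intro h0
        apply htne
        have htξ : t = ξ := by rw [← hnξ, h0, zero_add]
        have hmem : t ∈ T ⊓ X := Submodule.mem_inf.mpr ⟨htT, htξ ▸ hξX⟩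
        rw [hTX, Submodule.mem_bot] at hmem
        exact hmem
      have hKne : K ≠ ⊥ := fun h0 => hnne ((Submodule.mem_bot A).mp (h0 ▸ hnK))
      have hKann : ∀ x ∈ jrad A, ∀ k ∈ K, x • k = (0 : P) := by
        intro x hx k hk
        obtain ⟨hk1, _⟩ := Submodule.mem_inf.mp hk
        obtain ⟨t', ht', ξ', hξ', rfl⟩ := Submodule.mem_sup.mp hk1
        rw [smul_add, jj_ann h3 t' (show (t' ∈ jSmul A (jSmul A (⊤ : Submodule A P))) from hTJ2 ht') x hx,
          jrad_smul_eq_zero_of_mem_semisimple hX hx hξ', add_zero]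
      haveI hKcl : ComplementedLattice (Submodule A ↥K) := by
        apply complementedLattice_of_jrad_torsion hss
        intro x hx v
        apply Subtype.ext
        show x • (v : P) = 0
        exact hKann x hx v v.2
      haveI : Nontrivial ↥K := by
        obtain ⟨k, hk, hkne⟩ := (Submodule.ne_bot_iff K).mp hKne
        exact ⟨⟨k, hk⟩, 0, by simpa using hkne⟩
      haveI : IsSemisimpleModule A ↥K := (isSemisimpleModule_iff A ↥K).mpr hKcl
      obtain ⟨S', hS'⟩ := IsSemisimpleModule.exists_simple_submodule A ↥K
      set S := S'.map K.subtype with hSdef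
      haveI hSsimple : IsSimpleModule A ↥S := by
        haveI := hS'
        exact IsSimpleModule.congr
          (Submodule.equivMapOfInjective K.subtype (Submodule.injective_subtype K) S').symm
      have hSK : S ≤ K := Submodule.map_subtype_le _ _
      have hSN : S ≤ N := hSK.trans hKN
      have hSdisj : S ⊓ jSmul A N = ⊥ := by
        rw [eq_bot_iff]
        rintro y ⟨hy1, hy2⟩
        have hyK := hSK hy1
        obtain ⟨hyTX, _⟩ := Submodule.mem_inf.mp hyK
        obtain ⟨t', ht', ξ', hξ', hsum⟩ := Submodule.mem_sup.mp hyTX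
        have hyJM : y ∈ jSmul A M := by rw [hjM]; exact hy2
        have hyW : y ∈ W := hJMle hyJM
        have hξW : ξ' ∈ W := by
          have hξeq : ξ' = y - t' := by rw [← hsum]; abel
          rw [hξeq]
          exact Submodule.sub_mem _ hyW (hTW ht')
        have hξ0 : ξ' = 0 := by
          have hmem : ξ' ∈ X ⊓ J2P := Submodule.mem_inf.mpr ⟨hξ', hWJ2 hξW⟩
          rw [hXJ2, Submodule.mem_bot] at hmem
          exact hmem
        have hyT : y ∈ T := by
          have : t' = y := by rw [← hsum, hξ0, add_zero]
          exact this ▸ ht'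
        have hfin : y ∈ jSmul A M ⊓ T := Submodule.mem_inf.mpr ⟨hyJM, hyT⟩
        rw [hinfW] at hfin
        exact hfin
      obtain ⟨D, hDN, hD1, hD2⟩ := exists_compl_submodule hss hSN hSdisj
      exact hN ⟨S, hSsimple, hSN, D, hDN, hD1, hD2⟩
    rw [← hsupW, hTbot, sup_bot_eq]


end
end

section
/- Let A be a ring such that A/J is semisimple, where J = J(A) is the Jacobson radical, with J^2 = 0 possible as part of J^3 = 0. Let M be a submodule of JP for P projective, and suppose N is a direct summand of M with JM = JN and N containing no simple direct summand. If m ∈ N satisfies Jm = 0 then m ∈ JM. -/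
open CategoryTheory

noncomputable section

lemma jq_semisimple (A : Type) [Ring A] (hss : SemisimpleModJ A)
    (Q : Type) [AddCommGroup Q] [Module A Q]
    (h : ∀ x ∈ jrad A, ∀ q : Q, x • q = 0) :
    IsSemisimpleModule A Q := by
  classical
  haveI : IsSemisimpleRing (jrad A).ringCon.Quotient := hss
  set c := (jrad A).ringCon with hc
  letI : SMul c.Quotient Q :=
    ⟨fun r q => Quotient.liftOn' r (fun a => a • q) (by
      intro a b hab
      have hab' : a - b ∈ jrad A := by
        rw [← TwoSidedIdeal.rel_iff]
        exact hab
      have := h _ hab' q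
      rw [sub_smul] at this
      simpa [sub_eq_zero] using this)⟩
  letI : Module c.Quotient Q :=
    Function.Surjective.moduleLeft (RingCon.mk' c)
      (fun r => Quotient.inductionOn' r fun a => ⟨a, rfl⟩)
      (fun a q => rfl)
  haveI hQ : IsSemisimpleModule c.Quotient Q := inferInstance
  refine { exists_isCompl := ?_ }
  intro p
  let p' : Submodule c.Quotient Q :=
    { carrier := p
      add_mem' := fun ha hb => p.add_mem ha hb
      zero_mem' := p.zero_mem
      smul_mem' := by
        intro r x hx
        refine Quotient.inductionOn' r (fun a => ?_)
        exact p.smul_mem a hx }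
  obtain ⟨q', hq'⟩ := exists_isCompl p'
  let q : Submodule A Q :=
    { carrier := q'
      add_mem' := fun ha hb => q'.add_mem ha hb
      zero_mem' := q'.zero_mem
      smul_mem' := fun a x hx => q'.smul_mem (RingCon.mk' c a) hx }
  refine ⟨q, ?_, ?_⟩
  · rw [disjoint_iff, Submodule.eq_bot_iff]
    intro x hx
    have : x ∈ p' ⊓ q' := hx
    rw [hq'.inf_eq_bot] at this
    simpa using this
  · rw [codisjoint_iff, Submodule.eq_top_iff']
    intro x
    have : x ∈ p' ⊔ q' := by rw [hq'.sup_eq_top]; trivial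
    obtain ⟨y, hy, z, hz, rfl⟩ := Submodule.mem_sup.mp this
    exact Submodule.add_mem_sup hy hz

/-- If `M ≤ J·P` with `P` projective, `N` is a direct summand of `M` with
`J·M = J·N` and `N` has no simple direct summand, then every element of `N`
annihilated by `J` lies in `J·M`. -/
theorem stmt_9 (A : Type) [Ring A] (hss : SemisimpleModJ A) (h3 : JCubeZero A)
    (P : Type) [AddCommGroup P] [Module A P] (hP : Module.Projective A P)
    (M N Z : Submodule A P) (hM : M ≤ jSmul A (⊤ : Submodule A P))
    (hNZ : N ⊓ Z = ⊥) (hNZ' : N ⊔ Z = M) (hJ : jSmul A M = jSmul A N)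
    (hN : NoSimpleSummand A N)
    (m : P) (hm : m ∈ N) (hann : ∀ x ∈ jrad A, x • m = 0) :
    m ∈ jSmul A M := by
  classical
  rw [hJ]
  by_contra hmK
  set K : Submodule A P := jSmul A N with hK
  have hKN : K ≤ N := by
    rw [hK, jSmul, Submodule.span_le]
    rintro y ⟨x, hx, n, hn, rfl⟩
    exact N.smul_mem x hn
  set Am : Submodule A P := Submodule.span A {m} with hAm
  have hAmN : Am ≤ N := by
    rw [hAm, Submodule.span_le, Set.singleton_subset_iff]; exact hm
  haveI : IsSemisimpleModule A ↥Am := by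
    apply jq_semisimple A hss
    intro x hx q
    obtain ⟨p, hp⟩ := q
    obtain ⟨a, rfl⟩ := Submodule.mem_span_singleton.mp hp
    apply Subtype.ext
    show x • (a • m) = (0 : P)
    rw [smul_smul]
    exact hann _ ((jrad A).mul_mem_right x a hx)
  have hne : ¬ Am ≤ K := fun hle => hmK (hle (Submodule.mem_span_singleton_self m))
  obtain ⟨S₀, hS₀simple, hS₀⟩ :
      ∃ S₀ : Submodule A ↥Am, IsSimpleModule A ↥S₀ ∧ ¬ S₀ ≤ K.comap Am.subtype := by
    by_contra hcon
    push_neg at hcon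
    have htop : (⊤ : Submodule A ↥Am) ≤ K.comap Am.subtype := by
      rw [← IsSemisimpleModule.sSup_simples_eq_top A ↥Am]
      exact sSup_le fun W hW => hcon W hW
    exact hne fun p hp => htop (show (⟨p, hp⟩ : ↥Am) ∈ ⊤ from trivial)
  set S : Submodule A P := S₀.map Am.subtype with hS
  haveI hSsimple : IsSimpleModule A ↥S := by
    haveI := hS₀simple
    exact IsSimpleModule.congr
      (Submodule.equivMapOfInjective Am.subtype (Submodule.injective_subtype Am) S₀).symm
  have hSN : S ≤ N := le_trans (Submodule.map_subtype_le Am S₀) hAmN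
  have hSK : ¬ S ≤ K := fun h => hS₀ (Submodule.map_le_iff_le_comap.mp h)
  have hSKbot : S ⊓ K = ⊥ := by
    rcases eq_bot_or_eq_top ((S ⊓ K).comap S.subtype) with h | h
    · have h2 := Submodule.map_comap_subtype (p := S) (p' := S ⊓ K)
      rw [h, Submodule.map_bot, ← inf_assoc, inf_idem] at h2
      exact h2.symm
    · exfalso
      apply hSK
      have h2 := Submodule.map_comap_subtype (p := S) (p' := S ⊓ K)
      rw [h, Submodule.map_top, Submodule.range_subtype, ← inf_assoc, inf_idem] at h2
      calc S = S ⊓ K := h2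
        _ ≤ K := inf_le_right
  set K' : Submodule A ↥N := K.comap N.subtype with hK'
  haveI : IsSemisimpleModule A (↥N ⧸ K') := by
    apply jq_semisimple A hss
    intro x hx q
    refine Quotient.inductionOn' q fun n => ?_
    have hxn : x • (n : P) ∈ K := by
      rw [hK, jSmul]
      exact Submodule.subset_span ⟨x, hx, n, n.2, rfl⟩
    have : Quotient.mk'' n = Submodule.Quotient.mk (p := K') n := rfl
    rw [this, ← Submodule.Quotient.mk_smul, Submodule.Quotient.mk_eq_zero]
    exact hxn
  set Sc : Submodule A ↥N := S.comap N.subtype with hSc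
  obtain ⟨Cb, hCb⟩ := exists_isCompl (Sc.map K'.mkQ)
  set C' : Submodule A ↥N := Cb.comap K'.mkQ with hC'
  set C : Submodule A P := C'.map N.subtype with hC
  apply hN
  refine ⟨S, hSsimple, hSN, C, Submodule.map_subtype_le N C', ?_, ?_⟩
  · -- S ⊓ C = ⊥
    rw [Submodule.eq_bot_iff]
    rintro x ⟨hxS, hxC⟩
    obtain ⟨n, hn, rfl⟩ := hxC
    have h1 : K'.mkQ n ∈ Sc.map K'.mkQ := Submodule.mem_map_of_mem hxS
    have h2 : K'.mkQ n ∈ Cb := hn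
    have h3' : K'.mkQ n ∈ (Sc.map K'.mkQ) ⊓ Cb := ⟨h1, h2⟩
    rw [hCb.inf_eq_bot, Submodule.mem_bot] at h3'
    have hnK : (n : P) ∈ K := by
      have : n ∈ K' := by
        rwa [show K'.mkQ n = Submodule.Quotient.mk n from rfl,
          Submodule.Quotient.mk_eq_zero] at h3'
      exact this
    have : (n : P) ∈ S ⊓ K := ⟨hxS, hnK⟩
    rw [hSKbot, Submodule.mem_bot] at this
    exact this
  · -- S ⊔ C = N
    apply le_antisymm
    · exact sup_le hSN (Submodule.map_subtype_le N C')
    · intro x hx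
      set n : ↥N := ⟨x, hx⟩ with hn
      have : K'.mkQ n ∈ (Sc.map K'.mkQ) ⊔ Cb := by rw [hCb.sup_eq_top]; trivial
      obtain ⟨a, ha, b, hb, hab⟩ := Submodule.mem_sup.mp this
      obtain ⟨s, hs, rfl⟩ := ha
      have hns : n - s ∈ C' := by
        show K'.mkQ (n - s) ∈ Cb
        rw [map_sub, ← hab]
        simpa using hb
      have hx1 : (s : P) ∈ S := hs
      have hx2 : ((n - s : ↥N) : P) ∈ C := Submodule.mem_map_of_mem hns
      have : x = (s : P) + ((n - s : ↥N) : P) := by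
        push_cast
        simp [hn]
      rw [this]
      exact Submodule.add_mem_sup hx1 hx2


end
end

section
/- Let A be a semiprimary ring with r isomorphism classes of simple modules, and let m be such that Ext_A^k(T, T) = 0 for all simple T and all k ≥ m. If n > m·r and S_0, S_1, ..., S_n are simple A-modules, then the Yoneda product Ext_A^1(S_{n-1}, S_n) · Ext_A^1(S_{n-2}, S_{n-1}) · ... · Ext_A^1(S_0, S_1) = 0. -/
open CategoryTheory

noncomputable section

/-- Transfer subsingleton-ness of Ext groups along linear equivalences. -/
lemma ext_subsingleton_of_equiv (A : Type) [Ring A] {X X' Y Y' : ModuleCat.{0} A}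
    (u : X ≃ₗ[A] X') (v : Y ≃ₗ[A] Y') (d : ℕ)
    (h : Subsingleton (Abelian.Ext X' Y' d)) : Subsingleton (Abelian.Ext X Y d) := by
  have key : ∀ x : Abelian.Ext X Y d, x = 0 := by
    intro x
    have hx : x = (Abelian.Ext.mk₀ (u.toModuleIso : _ ≅ _).hom).comp
        (((Abelian.Ext.mk₀ (u.toModuleIso : _ ≅ _).inv).comp
            (x.comp (Abelian.Ext.mk₀ (v.toModuleIso : _ ≅ _).hom) (add_zero d)) (zero_add d)).comp
          (Abelian.Ext.mk₀ (v.toModuleIso : _ ≅ _).inv) (add_zero d)) (zero_add d) := by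
      have e1 : ((ModuleCat.ofHom u.toLinearMap : X ⟶ X') ≫ (ModuleCat.ofHom u.symm.toLinearMap : X' ⟶ X)) = 𝟙 X := by
        ext m; exact u.symm_apply_apply m
      have e2 : ((ModuleCat.ofHom v.toLinearMap : Y ⟶ Y') ≫ (ModuleCat.ofHom v.symm.toLinearMap : Y' ⟶ Y)) = 𝟙 Y := by
        ext m; exact v.symm_apply_apply m
      simp
      rw [e1, e2]
      simp
    rw [hx, Subsingleton.elim ((Abelian.Ext.mk₀ (u.toModuleIso : _ ≅ _).inv).comp
            (x.comp (Abelian.Ext.mk₀ (v.toModuleIso : _ ≅ _).hom) (add_zero d)) (zero_add d))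
        (0 : Abelian.Ext X' Y' d)]
    simp
  exact ⟨fun a b => (key a).trans (key b).symm⟩

/-- The segment of the chain of extension classes from index `a` to `a + k`. -/
def segChain (A : Type) [Ring A] (S : ℕ → ModuleCat.{0} A)
    (e : ∀ i : ℕ, Abelian.Ext (S i) (S (i + 1)) 1) (a : ℕ) :
    ∀ k : ℕ, Abelian.Ext (S a) (S (a + k)) k
  | 0 => Abelian.Ext.mk₀ (𝟙 (S a))
  | k + 1 => (segChain A S e a k).comp (e (a + k)) rfl

lemma extChain_split (A : Type) [Ring A] (S : ℕ → ModuleCat.{0} A)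
    (e : ∀ i : ℕ, Abelian.Ext (S i) (S (i + 1)) 1) (a : ℕ) :
    ∀ k : ℕ, extChain A S e (a + k) =
      (extChain A S e a).comp (segChain A S e a k) rfl
  | 0 => (Abelian.Ext.comp_mk₀_id _).symm
  | k + 1 => by
      show (extChain A S e (a + k)).comp (e (a + k)) rfl = _
      rw [extChain_split A S e a k]
      exact Abelian.Ext.comp_assoc _ _ _ rfl rfl rfl

/-- Over a semiprimary ring with `r` isomorphism classes of simple modules and
`Ext^k(T, T) = 0` for all simple `T` and `k ≥ m`: if `n > m·r`, then any Yoneda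
product `Ext¹(S_{n-1}, S_n) · ... · Ext¹(S₀, S₁)` of classes between simple
modules vanishes. -/
theorem stmt_16 (A : Type) [Ring A] (hA : IsSemiprimary A)
    (r m : ℕ) (rep : Fin r → ModuleCat.{0} A)
    (hrep : ∀ i, IsSimpleModule A (rep i))
    (hrepAll : ∀ S : ModuleCat.{0} A, IsSimpleModule A S →
      ∃ i, Nonempty (S ≃ₗ[A] rep i))
    (hrepNe : ∀ i j, i ≠ j → IsEmpty (rep i ≃ₗ[A] rep j))
    (hvan : ExtSelfVanishes A m)
    (n : ℕ) (hn : m * r < n)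
    (S : ℕ → ModuleCat.{0} A) (hS : ∀ i : ℕ, i ≤ n → IsSimpleModule A (S i))
    (e : ∀ i : ℕ, Abelian.Ext (S i) (S (i + 1)) 1) :
    extChain A S e n = 0 := by
  classical
  -- choose, for each i ≤ n, the representative class of S i
  have hf : ∀ i : Fin (n + 1), ∃ j : Fin r, Nonempty ((S i.val) ≃ₗ[A] rep j) :=
    fun i => hrepAll (S i.val) (hS i.val (by omega))
  choose f hfspec using hf
  -- pigeonhole: some class occurs more than m times
  obtain ⟨y, hy⟩ := Fintype.exists_lt_card_fiber_of_mul_lt_card (f := f) (n := m)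
    (by simpa [Fintype.card_fin, Nat.mul_comm r m] using Nat.lt_succ_of_lt hn)
  set t : Finset (Fin (n + 1)) := {x | f x = y} with ht
  have htne : t.Nonempty := Finset.card_pos.mp (by omega)
  set a : Fin (n + 1) := t.min' htne with ha
  set b : Fin (n + 1) := t.max' htne with hb
  have hat : a ∈ t := t.min'_mem htne
  have hbt : b ∈ t := t.max'_mem htne
  have hab : ∀ x ∈ t, a ≤ x ∧ x ≤ b := fun x hx => ⟨t.min'_le x hx, t.le_max' x hx⟩
  -- the fiber embeds into Icc a b, so b - a ≥ m
  have hcard : t.card ≤ (b : ℕ) - a + 1 := by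
    have h1 : t.image Fin.val ⊆ Finset.Icc (a : ℕ) (b : ℕ) := by
      intro x hx
      obtain ⟨z, hz, rfl⟩ := Finset.mem_image.mp hx
      exact Finset.mem_Icc.mpr ⟨(hab z hz).1, (hab z hz).2⟩
    calc t.card = (t.image Fin.val).card :=
          (Finset.card_image_of_injective t Fin.val_injective).symm
      _ ≤ (Finset.Icc (a : ℕ) (b : ℕ)).card := Finset.card_le_card h1
      _ = (b : ℕ) + 1 - a := Nat.card_Icc _ _
      _ ≤ (b : ℕ) - a + 1 := by omega
  have hmd : m ≤ (b : ℕ) - (a : ℕ) := by omega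
  have hale : (a : ℕ) ≤ (b : ℕ) := (hab b hbt).1
  obtain ⟨u⟩ := hfspec a
  obtain ⟨v⟩ := hfspec b
  rw [Finset.mem_filter] at hat hbt
  rw [hat.2] at u
  rw [hbt.2] at v
  -- split n = a + d + k with d = b - a
  obtain ⟨d, hd⟩ : ∃ d : ℕ, (b : ℕ) = (a : ℕ) + d := ⟨(b : ℕ) - a, by omega⟩
  have hbn : (b : ℕ) ≤ n := by omega
  obtain ⟨k, hk⟩ : ∃ k : ℕ, n = (a : ℕ) + d + k := ⟨n - ((a : ℕ) + d), by omega⟩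
  rw [hk]
  -- the middle segment vanishes
  have hsub : Subsingleton (Abelian.Ext (S (a : ℕ)) (S ((a : ℕ) + d)) d) := by
    rw [← hd]
    exact ext_subsingleton_of_equiv A u v d (hvan (rep y) (hrep y) d (by omega))
  have hseg : segChain A S e (a : ℕ) d = 0 := Subsingleton.elim _ _
  rw [extChain_split A S e ((a : ℕ) + d) k, extChain_split A S e (a : ℕ) d, hseg]
  simp

end
end

section
/- Let A be a ring with A/J semisimple and J^3 = 0, S a simple A-module with associated sequence (M_n) and summands Y_n (where Ω M_{n-1} = M_n ⊕ Y_n with Y_n a semisimple direct summand of J^2 P(M_{n-1})). Then for each fixed n > 0: pd_A(S) < ∞ if and only if pd_A(M_n) < ∞ and pd_A(Y_k) < ∞ for all 1 ≤ k ≤ n. Consequently, if M_t = 0 for some t, then pd_A(S) < ∞ if and only if pd_A(Y_k) < ∞ for all k ≥ 1. -/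
open CategoryTheory

noncomputable section

/-! ### Auxiliary machinery for `stmt_19` -/

section Stmt19Aux

open CategoryTheory Limits DerivedCategory Pretriangulated

variable {A : Type} [Ring A]

/-- A linear map as a morphism in `ModuleCat`. -/
noncomputable def lhom19 {X Y : ModuleCat.{0} A} (f : ↥X →ₗ[A] ↥Y) : X ⟶ Y := ModuleCat.ofHom f

/-- The single cochain complex concentrated in degree `0`. -/
noncomputable abbrev sgl19 (X : ModuleCat.{0} A) : CochainComplex (ModuleCat.{0} A) ℤ :=
  (CochainComplex.singleFunctor (ModuleCat.{0} A) 0).obj X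

lemma sgl19_d (X : ModuleCat.{0} A) (i j : ℤ) : (sgl19 X).d i j = 0 :=
  HomologicalComplex.single_obj_d _ _ _ _ _

lemma chainMap_from_single_eq_zero19 (P : ModuleCat.{0} A)
    (T : CochainComplex (ModuleCat.{0} A) ℤ) (hT : IsZero (T.X 0))
    (w : sgl19 P ⟶ T) : w = 0 := by
  apply HomologicalComplex.hom_ext
  intro i
  by_cases hi : i = 0
  · subst hi
    exact hT.eq_of_tgt _ _
  · exact (HomologicalComplex.isZero_single_obj_X _ 0 P i hi).eq_of_src _ _

lemma nullhomotopy_from_single19 (P : ModuleCat.{0} A) (hP : Module.Projective A P)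
    (T : CochainComplex (ModuleCat.{0} A) ℤ) (hT : ∀ n, T.ExactAt n)
    (φ : sgl19 P ⟶ T) : Nonempty (Homotopy φ 0) := by
  classical
  have hP0 : Module.Projective A ((sgl19 P).X 0) := by
    have e := HomologicalComplex.singleObjXSelf (ComplexShape.up ℤ) 0 P
    exact Module.Projective.of_equiv e.toLinearEquiv.symm
  have hex := hT 0
  rw [HomologicalComplex.exactAt_iff, ShortComplex.moduleCat_exact_iff] at hex
  set p : ℤ := (ComplexShape.up ℤ).prev 0 with hp
  set q : ℤ := (ComplexShape.up ℤ).next 0 with hq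
  have hcomm : ∀ x : (sgl19 P).X 0, T.d 0 q (φ.f 0 x) = 0 := by
    intro x
    have h2 : φ.f 0 ≫ T.d 0 q = 0 := by
      rw [φ.comm 0 q, sgl19_d, zero_comp]
    calc T.d 0 q (φ.f 0 x) = (φ.f 0 ≫ T.d 0 q) x := rfl
    _ = (0 : (sgl19 P).X 0 ⟶ T.X q) x := by rw [h2]
    _ = 0 := rfl
  letI K0 : Submodule A (T.X 0) := LinearMap.ker (T.d 0 q).hom
  have hsurj : Function.Surjective ((T.d p 0).hom.codRestrict K0 (by
      intro y
      have h3 : T.d p 0 ≫ T.d 0 q = 0 := T.d_comp_d p 0 q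
      calc T.d 0 q (T.d p 0 y) = (T.d p 0 ≫ T.d 0 q) y := rfl
      _ = (0 : T.X p ⟶ T.X q) y := by rw [h3]
      _ = 0 := rfl)) := by
    rintro ⟨x, hx⟩
    obtain ⟨y, hy⟩ := hex x hx
    exact ⟨y, Subtype.ext hy⟩
  obtain ⟨h₀, hh₀⟩ := Module.projective_lifting_property (R := A)
    ((T.d p 0).hom.codRestrict K0 _) ((φ.f 0).hom.codRestrict K0 (fun x => hcomm x)) hsurj
  have key : ∀ x : (sgl19 P).X 0, T.d p 0 (h₀ x) = φ.f 0 x := by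
    intro x
    have := congrArg (fun (f : _ →ₗ[A] K0) => ((f x : K0) : T.X 0)) hh₀
    exact this
  have hrel : (ComplexShape.up ℤ).Rel p 0 := by
    simp only [hp, CochainComplex.prev]
    simp [ComplexShape.up_Rel]
  refine ⟨⟨fun i j => if h : i = 0 ∧ j = p then
      ((sgl19 P).XIsoOfEq h.1).hom ≫ (lhom19 h₀) ≫ (T.XIsoOfEq h.2).inv
    else 0, ?_, ?_⟩⟩
  · intro i j hij
    have hc : ¬ (i = 0 ∧ j = p) := by
      rintro ⟨rfl, rfl⟩
      exact hij hrel
    exact dif_neg hc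
  · intro i
    by_cases hi : i = 0
    · subst hi
      rw [prevD_eq _ hrel, dNext, AddMonoidHom.mk'_apply, sgl19_d, zero_comp]
      rw [dif_pos ⟨rfl, rfl⟩, HomologicalComplex.XIsoOfEq_rfl, HomologicalComplex.XIsoOfEq_rfl]
      apply ModuleCat.hom_ext; apply LinearMap.ext
      intro x
      simpa [lhom19] using (key x).symm
    · have h1 : φ.f i = 0 :=
        (HomologicalComplex.isZero_single_obj_X _ 0 P i hi).eq_of_src _ _
      rw [h1, dNext, AddMonoidHom.mk'_apply, sgl19_d, zero_comp,
        prevD, AddMonoidHom.mk'_apply]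
      beta_reduce
      rw [dif_neg (show ¬(i = 0 ∧ (ComplexShape.up ℤ).prev i = p) from fun h => hi h.1),
        zero_comp]
      simp

lemma homK_from_single_to_acyclic19 (P : ModuleCat.{0} A) (hP : Module.Projective A P)
    (M : HomotopyCategory (ModuleCat.{0} A) (ComplexShape.up ℤ))
    (hM : (HomotopyCategory.subcategoryAcyclic (ModuleCat.{0} A)) M)
    (u : (HomotopyCategory.quotient _ _).obj (sgl19 P) ⟶ M) : u = 0 := by
  obtain ⟨Mas⟩ := M
  obtain ⟨u', rfl⟩ := (HomotopyCategory.quotient _ _).map_surjective u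
  replace hM : (HomotopyCategory.subcategoryAcyclic (ModuleCat.{0} A))
      ((HomotopyCategory.quotient _ _).obj Mas) := hM
  rw [HomotopyCategory.quotient_obj_mem_subcategoryAcyclic_iff_exactAt] at hM
  obtain ⟨h⟩ := nullhomotopy_from_single19 P hP Mas hM u'
  rw [HomotopyCategory.eq_of_homotopy _ _ h, Functor.map_zero]
  rfl

lemma derived_hom_from_single_zero19 [HasDerivedCategory.{1} (ModuleCat.{0} A)]
    (P : ModuleCat.{0} A) (hP : Module.Projective A P)
    (T : CochainComplex (ModuleCat.{0} A) ℤ) (hT : IsZero (T.X 0))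
    (f : Qh.obj ((HomotopyCategory.quotient _ _).obj (sgl19 P)) ⟶
      Qh.obj ((HomotopyCategory.quotient _ _).obj T)) : f = 0 := by
  set W := (HomotopyCategory.subcategoryAcyclic (ModuleCat.{0} A)).trW with hW
  obtain ⟨φ, hφ⟩ := Localization.exists_leftFraction Qh W f
  obtain ⟨Z, g, h, hdist, hZ⟩ := φ.hs
  have h1 : φ.f ≫ g = 0 :=
    homK_from_single_to_acyclic19 P hP Z hZ (φ.f ≫ g)
  obtain ⟨g', hg'⟩ := Pretriangulated.Triangle.coyoneda_exact₂ _ hdist φ.f h1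
  obtain ⟨w, rfl⟩ := (HomotopyCategory.quotient _ _).map_surjective g'
  rw [chainMap_from_single_eq_zero19 P T hT w, Functor.map_zero] at hg'
  replace hg' : φ.f = 0 := hg'.trans zero_comp
  rw [hφ, MorphismProperty.LeftFraction.map, hg', Functor.map_zero, zero_comp]

noncomputable def singleIsoQhQuot19 [HasDerivedCategory.{1} (ModuleCat.{0} A)]
    (X : ModuleCat.{0} A) :
    (DerivedCategory.singleFunctor (ModuleCat.{0} A) 0).obj X ≅
      Qh.obj ((HomotopyCategory.quotient _ _).obj (sgl19 X)) := by
  refine ?_ ≪≫ (quotientCompQhIso (ModuleCat.{0} A)).symm.app (sgl19 X)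
  have e := singleFunctorsPostcompQIso (ModuleCat.{0} A)
  exact
    { hom := (e.hom.hom 0).app X
      inv := (e.inv.hom 0).app X
      hom_inv_id := by
        have h1 : e.hom ≫ e.inv = 𝟙 _ := e.hom_inv_id
        have h2 := congrArg (fun t => (SingleFunctors.Hom.hom t 0).app X) h1
        exact h2
      inv_hom_id := by
        have h1 : e.inv ≫ e.hom = 𝟙 _ := e.inv_hom_id
        have h2 := congrArg (fun t => (SingleFunctors.Hom.hom t 0).app X) h1
        exact h2 }

lemma ext_subsingleton_of_projective19 (P Y : ModuleCat.{0} A)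
    (hP : Module.Projective A P) (n : ℕ) (hn : 0 < n)
    [CategoryTheory.HasExt.{1} (ModuleCat.{0} A)] :
    Subsingleton (CategoryTheory.Abelian.Ext P Y n) := by
  letI := HasDerivedCategory.standard (ModuleCat.{0} A)
  have hsub : Subsingleton ((DerivedCategory.singleFunctor (ModuleCat.{0} A) 0).obj P ⟶
      ((DerivedCategory.singleFunctor (ModuleCat.{0} A) 0).obj Y)⟦(n : ℤ)⟧) := by
    set T : CochainComplex (ModuleCat.{0} A) ℤ :=
      (CategoryTheory.shiftFunctor (CochainComplex (ModuleCat.{0} A) ℤ) (n : ℤ)).obj (sgl19 Y)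
      with hTdef
    have hT : IsZero (T.X 0) := by
      have : ((0 : ℤ) + (n : ℤ)) ≠ 0 := by
        have : (0:ℤ) < (n:ℤ) := by exact_mod_cast hn
        omega
      exact HomologicalComplex.isZero_single_obj_X (ComplexShape.up ℤ) 0 Y _ this
    let qY := (HomotopyCategory.quotient (ModuleCat.{0} A) (ComplexShape.up ℤ)).obj (sgl19 Y)
    let eP := singleIsoQhQuot19 (A := A) P
    let eY :
        ((DerivedCategory.singleFunctor (ModuleCat.{0} A) 0).obj Y)⟦(n : ℤ)⟧ ≅
          Qh.obj ((HomotopyCategory.quotient _ _).obj T) :=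
      (CategoryTheory.shiftFunctor _ (n : ℤ)).mapIso (singleIsoQhQuot19 (A := A) Y) ≪≫
        (Qh.commShiftIso (n : ℤ)).symm.app qY ≪≫
        Qh.mapIso (((HomotopyCategory.quotient (ModuleCat.{0} A)
          (ComplexShape.up ℤ)).commShiftIso (n : ℤ)).symm.app (sgl19 Y))
    constructor
    intro f g
    have hf := derived_hom_from_single_zero19 P hP T hT (eP.inv ≫ f ≫ eY.hom)
    have hg := derived_hom_from_single_zero19 P hP T hT (eP.inv ≫ g ≫ eY.hom)
    calc f = eP.hom ≫ (eP.inv ≫ f ≫ eY.hom) ≫ eY.inv := by simp only [Category.assoc, Iso.hom_inv_id, Category.comp_id, Iso.hom_inv_id_assoc]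
    _ = eP.hom ≫ (eP.inv ≫ g ≫ eY.hom) ≫ eY.inv := by rw [hf, hg]
    _ = g := by simp only [Category.assoc, Iso.hom_inv_id, Category.comp_id, Iso.hom_inv_id_assoc]
  haveI : Subsingleton (ShiftedHom ((DerivedCategory.singleFunctor (ModuleCat.{0} A) 0).obj P)
      ((DerivedCategory.singleFunctor (ModuleCat.{0} A) 0).obj Y) (n : ℤ)) := hsub
  exact CategoryTheory.Abelian.Ext.homEquiv.subsingleton

end Stmt19Aux

section Stmt19Main

open CategoryTheory Abelian

variable {A : Type} [Ring A]

lemma ext_subsingleton_of_retract19 {X W : ModuleCat.{0} A} (Y : ModuleCat.{0} A)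
    (i : X ⟶ W) (r : W ⟶ X) (hir : i ≫ r = 𝟙 X) {n : ℕ}
    (h : Subsingleton (Abelian.Ext W Y n)) : Subsingleton (Abelian.Ext X Y n) := by
  constructor
  intro α β
  have h1 : (Ext.mk₀ r).comp α (zero_add n) = (Ext.mk₀ r).comp β (zero_add n) :=
    h.elim _ _
  calc α = (Ext.mk₀ (𝟙 X)).comp α (zero_add n) := (Ext.mk₀_id_comp α).symm
  _ = (Ext.mk₀ i).comp ((Ext.mk₀ r).comp α (zero_add n)) (zero_add n) := by
      rw [Ext.mk₀_comp_mk₀_assoc, hir]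
  _ = (Ext.mk₀ i).comp ((Ext.mk₀ r).comp β (zero_add n)) (zero_add n) := by rw [h1]
  _ = β := by rw [Ext.mk₀_comp_mk₀_assoc, hir, Ext.mk₀_id_comp]

/-- Finite projective dimension. -/
def FPD19 (X : ModuleCat.{0} A) : Prop := ∃ n, projDimLE A X n

lemma fpd19_iff (X : ModuleCat.{0} A) : projDim A X ≠ ⊤ ↔ FPD19 X := by
  constructor
  · intro h
    by_contra hn
    apply h
    rw [projDim]
    have : {e : ℕ∞ | ∃ n : ℕ, e = n ∧ projDimLE A X n} = ∅ :=
      Set.eq_empty_iff_forall_notMem.2 (by rintro e ⟨n, rfl, hpd⟩; exact hn ⟨n, hpd⟩)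
    rw [this, sInf_empty]
  · rintro ⟨n, hn⟩
    have h1 : projDim A X ≤ (n : ℕ∞) := sInf_le ⟨n, rfl, hn⟩
    exact ne_top_of_le_ne_top (by simp) h1

lemma fpd19_of_retract {X W : ModuleCat.{0} A} (i : X ⟶ W) (r : W ⟶ X)
    (hir : i ≫ r = 𝟙 X) (h : FPD19 W) : FPD19 X := by
  obtain ⟨n, hn⟩ := h
  exact ⟨n, fun N k hk => ext_subsingleton_of_retract19 N i r hir (hn N k hk)⟩

lemma fpd19_congr {X Y : ModuleCat.{0} A} (e : ↥X ≃ₗ[A] ↥Y) : FPD19 X ↔ FPD19 Y := by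
  constructor
  · intro h
    refine fpd19_of_retract (lhom19 e.symm.toLinearMap) (lhom19 e.toLinearMap) ?_ h
    apply ModuleCat.hom_ext; apply LinearMap.ext
    intro x
    exact e.apply_symm_apply x
  · intro h
    refine fpd19_of_retract (lhom19 e.toLinearMap) (lhom19 e.symm.toLinearMap) ?_ h
    apply ModuleCat.hom_ext; apply LinearMap.ext
    intro x
    exact e.symm_apply_apply x

lemma fpd19_prod (M N : Type) [AddCommGroup M] [Module A M] [AddCommGroup N] [Module A N] :
    FPD19 (ModuleCat.of A (M × N)) ↔ FPD19 (ModuleCat.of A M) ∧ FPD19 (ModuleCat.of A N) := by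
  constructor
  · intro h
    constructor
    · refine fpd19_of_retract (lhom19 (LinearMap.inl A M N))
        (lhom19 (LinearMap.fst A M N)) ?_ h
      apply ModuleCat.hom_ext; apply LinearMap.ext; intro x; rfl
    · refine fpd19_of_retract (lhom19 (LinearMap.inr A M N))
        (lhom19 (LinearMap.snd A M N)) ?_ h
      apply ModuleCat.hom_ext; apply LinearMap.ext; intro x; rfl
  · rintro ⟨⟨n₁, h₁⟩, ⟨n₂, h₂⟩⟩
    refine ⟨max n₁ n₂, fun Y k hk => ?_⟩
    have hb : Subsingleton (Abelian.Ext ((ModuleCat.of A M) ⊞ (ModuleCat.of A N)) Y k) := by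
      constructor
      intro α β
      haveI := h₁ Y k (lt_of_le_of_lt (le_max_left _ _) hk)
      haveI := h₂ Y k (lt_of_le_of_lt (le_max_right _ _) hk)
      apply Ext.biprod_ext
      · exact Subsingleton.elim _ _
      · exact Subsingleton.elim _ _
    exact ext_subsingleton_of_retract19 Y (ModuleCat.biprodIsoProd _ _).inv
      (ModuleCat.biprodIsoProd _ _).hom (Iso.inv_hom_id _) hb

lemma fpd19_of_subsingleton (X : ModuleCat.{0} A) (h : Subsingleton X) : FPD19 X := by
  refine ⟨0, fun N k hk => ?_⟩
  have hid : (𝟙 X : X ⟶ X) = 0 := by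
    apply ModuleCat.hom_ext; apply LinearMap.ext
    intro x
    exact Subsingleton.elim _ _
  have hz : ∀ γ : Abelian.Ext X N k, γ = 0 := by
    intro γ
    rw [← Ext.mk₀_id_comp γ, hid, Ext.mk₀_zero, Ext.zero_comp]
  exact ⟨fun α β => by rw [hz α, hz β]⟩

lemma fpd19_syzygy (P M : ModuleCat.{0} A) (hP : Module.Projective A P)
    (π : ↥P →ₗ[A] ↥M) (hsurj : Function.Surjective π) :
    FPD19 M ↔ FPD19 (ModuleCat.of A ↥(LinearMap.ker π)) := by
  set Km : ModuleCat.{0} A := ModuleCat.of A ↥(LinearMap.ker π) with hKm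
  set Sc : ShortComplex (ModuleCat.{0} A) :=
    ShortComplex.mk (lhom19 ((LinearMap.ker π).subtype) : Km ⟶ P) (lhom19 π : P ⟶ M)
      (by apply ModuleCat.hom_ext; apply LinearMap.ext; rintro ⟨x, hx⟩; exact hx) with hSc
  have hSE : Sc.ShortExact :=
    { exact := by
        rw [ShortComplex.moduleCat_exact_iff]
        intro x hx
        exact ⟨⟨x, hx⟩, rfl⟩
      mono_f := (ModuleCat.mono_iff_injective _).2 (Subtype.val_injective)
      epi_g := (ModuleCat.epi_iff_surjective _).2 hsurj }
  constructor
  · rintro ⟨n, hn⟩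
    refine ⟨n, fun N k hk => ?_⟩
    have hz : ∀ γ : Abelian.Ext Km N k, γ = 0 := by
      intro γ
      haveI := hn N (1 + k) (by omega)
      have h1 : hSE.extClass.comp γ rfl = 0 := Subsingleton.elim _ _
      obtain ⟨x₂, hx₂⟩ := Ext.contravariant_sequence_exact₁ hSE N γ rfl h1
      haveI := ext_subsingleton_of_projective19 P N hP k (by omega)
      rw [← hx₂, Subsingleton.elim x₂ 0, Ext.comp_zero]
    exact ⟨fun α β => by rw [hz α, hz β]⟩
  · rintro ⟨n, hn⟩
    refine ⟨n + 1, fun N k hk => ?_⟩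
    obtain ⟨k, rfl⟩ : ∃ k', k = k' + 1 := ⟨k - 1, by omega⟩
    have hz : ∀ γ : Abelian.Ext M N (k + 1), γ = 0 := by
      intro γ
      haveI := ext_subsingleton_of_projective19 P N hP (k + 1) (by omega)
      have h2 : (Ext.mk₀ Sc.g).comp γ (zero_add _) = 0 := Subsingleton.elim _ _
      obtain ⟨x₁, hx₁⟩ := Ext.contravariant_sequence_exact₃ hSE N γ h2
        (show 1 + k = k + 1 by omega)
      haveI := hn N k (by omega)
      rw [← hx₁, Subsingleton.elim x₁ 0, Ext.comp_zero]
    exact ⟨fun α β => by rw [hz α, hz β]⟩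

noncomputable def kerEquiv19 {S : ModuleCat.{0} A} (d : AssocSeqData A S) (n : ℕ) :
    (↥(d.Msub n) × ↥(d.Ysub n)) ≃ₗ[A] ↥(LinearMap.ker (d.π n)) := by
  have hM : d.Msub n ≤ LinearMap.ker (d.π n) := (d.sup_eq n) ▸ le_sup_left
  have hY : d.Ysub n ≤ LinearMap.ker (d.π n) := (d.sup_eq n) ▸ le_sup_right
  refine LinearEquiv.ofBijective
    ((Submodule.inclusion hM).coprod (Submodule.inclusion hY)) ⟨?_, ?_⟩
  · rw [← LinearMap.ker_eq_bot, Submodule.eq_bot_iff]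
    rintro ⟨a, b⟩ hab
    rw [LinearMap.mem_ker] at hab
    have h1 : (a : ↥(d.P n)) + (b : ↥(d.P n)) = 0 := congrArg Subtype.val hab
    have ha2 : (a : ↥(d.P n)) ∈ d.Msub n ⊓ d.Ysub n := by
      refine ⟨a.2, ?_⟩
      have : (a : ↥(d.P n)) = -(b : ↥(d.P n)) := by
        rw [eq_neg_iff_add_eq_zero]; exact h1
      rw [this]
      exact neg_mem b.2
    rw [d.indep n] at ha2
    have ha3 : (a : ↥(d.P n)) = 0 := ha2
    have hb3 : (b : ↥(d.P n)) = 0 := by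
      have := h1
      rw [ha3, zero_add] at this
      exact this
    refine Prod.ext (Subtype.ext ha3) (Subtype.ext hb3)
  · rintro ⟨z, hz⟩
    rw [← d.sup_eq n] at hz
    obtain ⟨a, ha, b, hb, hab⟩ := Submodule.mem_sup.1 hz
    refine ⟨(⟨a, ha⟩, ⟨b, hb⟩), Subtype.ext ?_⟩
    simpa using hab

lemma step19 {S : ModuleCat.{0} A} (d : AssocSeqData A S) (n : ℕ) :
    FPD19 (d.M n) ↔
      (FPD19 (d.M (n + 1)) ∧ FPD19 (ModuleCat.of A ↥(d.Ysub n))) := by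
  have h1 := fpd19_syzygy (d.P n) (d.M n) (d.proj n) (d.π n) (d.surj n)
  have h2 : FPD19 (ModuleCat.of A ↥(LinearMap.ker (d.π n))) ↔
      FPD19 (ModuleCat.of A (↥(d.Msub n) × ↥(d.Ysub n))) :=
    fpd19_congr (kerEquiv19 d n).symm
  have h3 := fpd19_prod (A := A) ↥(d.Msub n) ↥(d.Ysub n)
  have h4 : FPD19 (d.M (n + 1)) ↔ FPD19 (ModuleCat.of A ↥(d.Msub n)) :=
    fpd19_congr ((d.isoM n).some)
  rw [h1, h2, h3, h4]

lemma aux19 {S : ModuleCat.{0} A} (d : AssocSeqData A S) (n : ℕ) :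
    FPD19 (d.M 0) ↔
      (FPD19 (d.M n) ∧ ∀ k, k < n → FPD19 (ModuleCat.of A ↥(d.Ysub k))) := by
  induction n with
  | zero => simp
  | succ n ih =>
    rw [ih, step19 d n]
    constructor
    · rintro ⟨⟨h5, h6⟩, h7⟩
      refine ⟨h5, fun k hk => ?_⟩
      rcases Nat.lt_succ_iff_lt_or_eq.1 hk with h | h
      · exact h7 k h
      · rw [h]; exact h6
    · rintro ⟨h5, h7⟩
      exact ⟨⟨h5, h7 n (Nat.lt_succ_self n)⟩, fun k hk => h7 k (hk.trans (Nat.lt_succ_self n))⟩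

end Stmt19Main

/-- For a ring with `A/J` semisimple and `J³ = 0`, a simple `S` with associated
sequence `(Mₙ)` and summands `Y_{k+1} = Ysub k`: for each `n > 0`, `pd S < ∞`
iff `pd Mₙ < ∞` and `pd Y_k < ∞` for `1 ≤ k ≤ n`; and if `M_t = 0` for some `t`,
then `pd S < ∞` iff all `pd Y_k < ∞`. -/
theorem stmt_19 (A : Type) [Ring A] (hss : SemisimpleModJ A) (h3 : JCubeZero A)
    (S : ModuleCat.{0} A) (hS : IsSimpleModule A S) (d : AssocSeqData A S) :
    (∀ n : ℕ, 0 < n →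
      (projDim A S ≠ ⊤ ↔
        projDim A (d.M n) ≠ ⊤ ∧
        ∀ k : ℕ, k < n → projDim A (ModuleCat.of A (d.Ysub k)) ≠ ⊤)) ∧
    ((∃ t : ℕ, Subsingleton (d.M t)) →
      (projDim A S ≠ ⊤ ↔
        ∀ k : ℕ, projDim A (ModuleCat.of A (d.Ysub k)) ≠ ⊤)) := by
  have hSM : FPD19 S ↔ FPD19 (d.M 0) := (fpd19_congr (d.iso0.some)).symm
  constructor
  · intro n hn
    simp only [fpd19_iff]
    exact hSM.trans (aux19 d n)
  · rintro ⟨t, ht⟩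
    simp only [fpd19_iff]
    constructor
    · intro hFS k
      exact ((hSM.trans (aux19 d (k + 1))).1 hFS).2 k (Nat.lt_succ_self k)
    · intro hY
      exact hSM.2 ((aux19 d t).2 ⟨fpd19_of_subsingleton _ ht, fun k _ => hY k⟩)

end
end
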